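/- arXiv:2401.01979 — 2 statements merged into one kernel-verified Lean document; each statement's English description precedes it below -/
import Mathlib

section
/- For every infinite cardinal κ, there exists an independent family F ⊆ P(κ) of cardinality 2^κ. -/
open Cardinal

universe u

/-- `F` is an independent family at `κ` (on a set of size `κ`): every finite
Boolean combination of members of `F` and complements of (other) members of `F`
has full cardinality `κ`. -/
def IsIndependentFamily {α : Type u} (κ : Cardinal.{u}) (F : Set (Set α)) : Prop :=
  ∀ s t : Finset (Set α), ↑s ⊆ F → ↑t ⊆ F → Disjoint s t →
    #↥((⋂ X ∈ s, X) ∩ ⋂ X ∈ t, Xᶜ) = κ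

/-- For every infinite cardinal `κ` there is an independent family at `κ` of
cardinality `2 ^ κ`. -/
theorem stmt7 (κ : Cardinal.{u}) (hκ : ℵ₀ ≤ κ) (α : Type u) (hα : #α = κ) :
    ∃ F : Set (Set α), #↥F = 2 ^ κ ∧ IsIndependentFamily κ F := by
  classical
  haveI : Infinite α := by
    rw [Cardinal.infinite_iff, hα]; exact hκ
  have hfin : #(Finset α × Finset (Finset α)) = #α := by
    rw [Cardinal.mk_prod, Cardinal.mk_finset_of_infinite, Cardinal.mk_finset_of_infinite,
      Cardinal.mk_finset_of_infinite, Cardinal.lift_id, Cardinal.mul_eq_self]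
    rwa [hα]
  obtain ⟨e⟩ := Cardinal.eq.mp hfin.symm
  -- the family
  set B : Set α → Set α := fun X => {a | (e a).1.filter (· ∈ X) ∈ (e a).2} with hB
  -- B is injective
  have hBmem : ∀ (X : Set α) (p : Finset α × Finset (Finset α)),
      e.symm p ∈ B X ↔ p.1.filter (· ∈ X) ∈ p.2 := by
    intro X p
    simp [hB, Set.mem_setOf_eq]
  have hBinj : Function.Injective B := by
    intro X Y hXY
    by_contra hne
    have : ∃ a, (a ∈ X ∧ a ∉ Y) ∨ (a ∈ Y ∧ a ∉ X) := by
      by_contra h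
      push_neg at h
      apply hne
      ext a
      have := h a
      tauto
    obtain ⟨a, ha⟩ := this
    have key : ∀ Z : Set α, e.symm ({a}, {{a}}) ∈ B Z ↔ a ∈ Z := by
      intro Z
      rw [hBmem]
      by_cases haZ : a ∈ Z
      · simp [Finset.filter_singleton, haZ]
      · simp [Finset.filter_singleton, haZ]
    rcases ha with ⟨h1, h2⟩ | ⟨h1, h2⟩
    · have := (key X).mpr h1
      rw [hXY, key] at this
      exact h2 this
    · have := (key Y).mpr h1
      rw [← hXY, key] at this
      exact h2 this
  refine ⟨Set.range B, ?_, ?_⟩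
  · rw [Cardinal.mk_range_eq _ hBinj, Cardinal.mk_set, hα]
  intro s t hs ht hst
  -- preimages
  have hpre : ∀ W ∈ s ∪ t, ∃ X, B X = W := by
    intro W hW
    rcases Finset.mem_union.mp hW with h | h
    · exact hs h
    · exact ht h
  set pre : Set α → Set α := fun W =>
    if h : ∃ X, B X = W then Classical.choose h else ∅ with hpredef
  have hpre2 : ∀ W ∈ s ∪ t, B (pre W) = W := by
    intro W hW
    have h := hpre W hW
    simp only [hpredef, dif_pos h]
    exact Classical.choose_spec h
  -- separating points
  set sep : Set α → Set α → α := fun X Y =>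
    if h : ∃ a, (a ∈ X ∧ a ∉ Y) ∨ (a ∈ Y ∧ a ∉ X) then Classical.choose h
    else Classical.arbitrary α with hsepdef
  have hsep : ∀ X Y : Set α, X ≠ Y → ((sep X Y ∈ X ∧ sep X Y ∉ Y) ∨ (sep X Y ∈ Y ∧ sep X Y ∉ X)) := by
    intro X Y hne
    have h : ∃ a, (a ∈ X ∧ a ∉ Y) ∨ (a ∈ Y ∧ a ∉ X) := by
      by_contra h
      push_neg at h
      apply hne
      ext a
      have := h a
      tauto
    simp only [hsepdef, dif_pos h]
    exact Classical.choose_spec h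
  -- the finite core
  set s₀ : Finset α := (s ×ˢ t).image (fun p => sep (pre p.1) (pre p.2)) with hs0
  -- the injection
  set f : α → α := fun a =>
    e.symm (insert a s₀, s.image fun W => (insert a s₀).filter (· ∈ pre W)) with hf
  have htarget : ∀ a : α, f a ∈ (⋂ X ∈ s, X) ∩ ⋂ X ∈ t, Xᶜ := by
    intro a
    constructor
    · simp only [Set.mem_iInter]
      intro W hW
      rw [← hpre2 W (Finset.mem_union_left _ hW), hf]
      rw [hBmem]
      exact Finset.mem_image_of_mem _ hW
    · simp only [Set.mem_iInter, Set.mem_compl_iff]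
      intro V hV
      rw [← hpre2 V (Finset.mem_union_right _ hV), hf, hBmem]
      simp only [Finset.mem_image]
      rintro ⟨W, hW, hWV⟩
      -- W ∈ s, V ∈ t, so B (pre W) = W ≠ V = B (pre V), hence pre W ≠ pre V
      have hWneV : W ≠ V := by
        intro h
        exact Finset.disjoint_left.mp hst hW (h ▸ hV)
      have hXY : pre W ≠ pre V := by
        intro h
        apply hWneV
        rw [← hpre2 W (Finset.mem_union_left _ hW), ← hpre2 V (Finset.mem_union_right _ hV), h]
      have hp : sep (pre W) (pre V) ∈ s₀ := by
        rw [hs0]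
        exact Finset.mem_image_of_mem (fun p => sep (pre p.1) (pre p.2))
          (Finset.mem_product.mpr (⟨hW, hV⟩ : (W, V).1 ∈ s ∧ (W, V).2 ∈ t))
      have hp' : sep (pre W) (pre V) ∈ insert a s₀ := Finset.mem_insert_of_mem hp
      have := hsep (pre W) (pre V) hXY
      have hmemiff := Finset.ext_iff.mp hWV (sep (pre W) (pre V))
      simp only [Finset.mem_filter] at hmemiff
      rcases this with ⟨h1, h2⟩ | ⟨h1, h2⟩
      · exact h2 (hmemiff.mp ⟨hp', h1⟩).2
      · exact h2 (hmemiff.mpr ⟨hp', h1⟩).2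
  have hfinj : Set.InjOn f (↑s₀ : Set α)ᶜ := by
    intro a ha b hb hab
    have : (insert a s₀, s.image fun W => (insert a s₀).filter (· ∈ pre W))
        = (insert b s₀, s.image fun W => (insert b s₀).filter (· ∈ pre W)) := by
      apply e.symm.injective hab
    have h1 : insert a s₀ = insert b s₀ := congrArg Prod.fst this
    have : a ∈ insert b s₀ := h1 ▸ Finset.mem_insert_self a s₀
    rcases Finset.mem_insert.mp this with h | h
    · exact h
    · exact absurd h ha
  apply le_antisymm
  · calc #↥((⋂ X ∈ s, X) ∩ ⋂ X ∈ t, Xᶜ) ≤ #α := Cardinal.mk_set_le _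
    _ = κ := hα
  · calc κ = #α := hα.symm
    _ = #↥(↑s₀ : Set α)ᶜ := (Cardinal.mk_compl_finset_of_infinite s₀).symm
    _ ≤ #↥((⋂ X ∈ s, X) ∩ ⋂ X ∈ t, Xᶜ) := by
        have h1 : #↥(↑s₀ : Set α)ᶜ = #↥(f '' (↑s₀ : Set α)ᶜ) :=
          (Cardinal.mk_image_eq_of_injOn f _ hfinj).symm
        rw [h1]
        apply Cardinal.mk_le_mk_of_subset
        rintro x ⟨a, -, rfl⟩
        exact htarget a
end

section
/- Let κ be a regular uncountable cardinal, λ < κ^+, and suppose ⟨A_α⟩_{α<λ} is a sequence of unbounded subsets of κ with pairwise bounded intersections, together with clubs ⟨C_α⟩_{α<λ} in κ such that [η, η+η) ∩ A_α = ∅ for every η ∈ C_α. Let B ⊆ κ be unbounded with B ∩ A_α bounded in κ for every α < λ. Then there exist an unbounded set A ⊆ κ and a club C ⊆ κ such that: A ∩ B is unbounded in κ; A ∩ A_α is bounded in κ for every α < λ; and [η, η+η) ∩ A = ∅ for every η ∈ C. -/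
/-- `X` is unbounded in `o`. -/
def UnbIn (o : Ordinal) (X : Set Ordinal) : Prop := ∀ β < o, ∃ γ ∈ X, β < γ

/-- `X` is bounded in `o`. -/
def BddIn (o : Ordinal) (X : Set Ordinal) : Prop := ∃ β < o, ∀ γ ∈ X, γ < β

/-- `C` is club (closed and unbounded) in `o`. -/
def ClubIn (o : Ordinal) (C : Set Ordinal) : Prop :=
  C ⊆ Set.Iio o ∧ UnbIn o C ∧
    ∀ β < o, 0 < β → (∀ γ < β, ∃ δ ∈ C, γ < δ ∧ δ < β) → β ∈ C

/-- The recursion step for building mad families: given `λ < κ⁺` many unbounded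
subsets `A_α` of regular uncountable `κ` with pairwise bounded intersections and
clubs `C_α` with `[η, η+η) ∩ A_α = ∅` for `η ∈ C_α`, and an unbounded `B` almost
disjoint from each `A_α`, there are an unbounded `A` meeting `B` unboundedly,
almost disjoint from each `A_α`, and a club `C` with `[η, η+η) ∩ A = ∅` for all
`η ∈ C`. -/
theorem stmt14 (κ : Cardinal.{0}) (hreg : κ.IsRegular) (hunc : ℵ₀ < κ)
    (lam : Ordinal) (hlam : lam < (Order.succ κ).ord)
    (A C : Ordinal → Set Ordinal)
    (hAsub : ∀ α < lam, A α ⊆ Set.Iio κ.ord)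
    (hAunb : ∀ α < lam, UnbIn κ.ord (A α))
    (hAint : ∀ α < lam, ∀ β < lam, α ≠ β → BddIn κ.ord (A α ∩ A β))
    (hCclub : ∀ α < lam, ClubIn κ.ord (C α))
    (hCA : ∀ α < lam, ∀ η ∈ C α, ∀ ξ, η ≤ ξ → ξ < η + η → ξ ∉ A α)
    (B : Set Ordinal) (hBsub : B ⊆ Set.Iio κ.ord) (hBunb : UnbIn κ.ord B)
    (hBA : ∀ α < lam, BddIn κ.ord (B ∩ A α)) :
    ∃ A' C' : Set Ordinal,
      A' ⊆ Set.Iio κ.ord ∧ UnbIn κ.ord A' ∧ ClubIn κ.ord C' ∧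
      UnbIn κ.ord (A' ∩ B) ∧
      (∀ α < lam, BddIn κ.ord (A' ∩ A α)) ∧
      ∀ η ∈ C', ∀ ξ, η ≤ ξ → ξ < η + η → ξ ∉ A' := by
  classical
  have hκ0 : Cardinal.aleph0 ≤ κ := hreg.aleph0_le
  have hlim : Order.IsSuccLimit κ.ord := Cardinal.isSuccLimit_ord hκ0
  -- a choice function picking elements of B above any bound
  let pick : Ordinal → Ordinal := fun β =>
    if h : β < κ.ord then Classical.choose (hBunb β h) else 0
  have pick_mem : ∀ β, β < κ.ord → pick β ∈ B := by
    intro β h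
    simp only [pick, dif_pos h]
    exact (Classical.choose_spec (hBunb β h)).1
  have pick_gt : ∀ β, β < κ.ord → β < pick β := by
    intro β h
    simp only [pick, dif_pos h]
    exact (Classical.choose_spec (hBunb β h)).2
  have pick_lt : ∀ β, β < κ.ord → pick β < κ.ord := by
    intro β h
    exact hBsub (pick_mem β h)
  -- the recursive sequence: each term jumps past four times the sup of earlier terms
  let seq : Ordinal → Ordinal := Ordinal.lt_wf.fix
    (fun i IH =>
      pick ((Ordinal.bsup i IH + Ordinal.bsup i IH) + (Ordinal.bsup i IH + Ordinal.bsup i IH)))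
  let s : Ordinal → Ordinal := fun i => Ordinal.bsup i (fun j _ => seq j)
  let t : Ordinal → Ordinal := fun i => (s i + s i) + (s i + s i)
  have seq_eq : ∀ i, seq i = pick (t i) := by
    intro i
    exact Ordinal.lt_wf.fix_eq _ i
  -- closure under sums
  have add_lt : ∀ a b : Ordinal, a < κ.ord → b < κ.ord → a + b < κ.ord := by
    intro a b ha hb
    rw [Cardinal.lt_ord, Ordinal.card_add]
    exact Cardinal.add_lt_of_lt hκ0 (Cardinal.lt_ord.mp ha) (Cardinal.lt_ord.mp hb)
  -- everything stays below κ
  have seq_lt : ∀ i, i < κ.ord → seq i < κ.ord := by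
    intro i
    induction i using Ordinal.induction with
    | _ i IH =>
      intro hi
      have hs : s i < κ.ord := by
        apply Ordinal.bsup_lt_ord
        · rw [hreg.cof_eq]
          exact Cardinal.lt_ord.mp hi
        · exact fun j hj => IH j hj (hj.trans hi)
      have hss : t i < κ.ord := add_lt _ _ (add_lt _ _ hs hs) (add_lt _ _ hs hs)
      rw [seq_eq]
      exact pick_lt _ hss
  have s_lt : ∀ i, i < κ.ord → s i < κ.ord := by
    intro i hi
    apply Ordinal.bsup_lt_ord
    · rw [hreg.cof_eq]; exact Cardinal.lt_ord.mp hi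
    · exact fun j hj => seq_lt j (hj.trans hi)
  have t_lt : ∀ i, i < κ.ord → t i < κ.ord := fun i hi =>
    add_lt _ _ (add_lt _ _ (s_lt i hi) (s_lt i hi)) (add_lt _ _ (s_lt i hi) (s_lt i hi))
  have seq_mem : ∀ i, i < κ.ord → seq i ∈ B := by
    intro i hi; rw [seq_eq]; exact pick_mem _ (t_lt i hi)
  have seq_gt : ∀ i, i < κ.ord → t i < seq i := by
    intro i hi; rw [seq_eq]; exact pick_gt _ (t_lt i hi)
  have seq_pos : ∀ i, i < κ.ord → 0 < seq i := by
    intro i hi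
    exact lt_of_le_of_lt zero_le (seq_gt i hi)
  have seq_le_s : ∀ j i, j < i → seq j ≤ s i := fun j i h => Ordinal.le_bsup _ j h
  have s_le_t : ∀ i, s i ≤ t i :=
    fun i => le_trans (le_self_add) (le_self_add)
  have seq_mono : ∀ j i, j < i → i < κ.ord → seq j < seq i := by
    intro j i h hi
    calc seq j ≤ s i := seq_le_s j i h
    _ ≤ t i := s_le_t i
    _ < seq i := seq_gt i hi
  have seq_ge : ∀ i, i < κ.ord → i ≤ seq i := by
    intro i
    induction i using Ordinal.induction with
    | _ i IH =>
      intro hi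
      by_contra h
      push_neg at h
      have h1 : seq i < i := h
      have h2 : seq (seq i) < seq i := seq_mono _ i h1 hi
      exact absurd (IH (seq i) h1 (h1.trans hi)) (not_le.mpr h2)
  -- the sets A' and C'
  set A' : Set Ordinal := {x | ∃ i, i < κ.ord ∧ seq i = x} with hA'
  set C' : Set Ordinal :=
    {η | η < κ.ord ∧ 0 < η ∧
      ((∃ i, i < κ.ord ∧ seq i + seq i = η) ∨
        ∀ γ < η, ∃ i, i < κ.ord ∧ γ < seq i + seq i ∧ seq i + seq i < η)} with hC'
  have A'subB : ∀ x ∈ A', x ∈ B := by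
    rintro x ⟨i, hi, rfl⟩; exact seq_mem i hi
  have A'sub : A' ⊆ Set.Iio κ.ord := by
    rintro x ⟨i, hi, rfl⟩; exact seq_lt i hi
  have A'unb : UnbIn κ.ord A' := by
    intro β hβ
    have hβ1 : β + 1 < κ.ord := by
      rw [Ordinal.add_one_eq_succ]; exact hlim.succ_lt hβ
    exact ⟨seq (β + 1), ⟨β + 1, hβ1, rfl⟩, lt_of_lt_of_le (lt_add_one β) (seq_ge _ hβ1)⟩
  -- C' is unbounded
  have C'unb : UnbIn κ.ord C' := by
    intro β hβ
    have hβ1 : β + 1 < κ.ord := by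
      rw [Ordinal.add_one_eq_succ]; exact hlim.succ_lt hβ
    refine ⟨seq (β + 1) + seq (β + 1),
      ⟨add_lt _ _ (seq_lt _ hβ1) (seq_lt _ hβ1),
        lt_of_lt_of_le (seq_pos _ hβ1) (le_self_add),
        Or.inl ⟨β + 1, hβ1, rfl⟩⟩, ?_⟩
    calc β < β + 1 := lt_add_one β
    _ ≤ seq (β + 1) := seq_ge _ hβ1
    _ ≤ seq (β + 1) + seq (β + 1) := le_self_add
  -- C' is closed
  have C'club : ClubIn κ.ord C' := by
    refine ⟨fun η hη => hη.1, C'unb, ?_⟩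
    intro β hβ hβ0 hcl
    refine ⟨hβ, hβ0, Or.inr ?_⟩
    intro γ hγ
    obtain ⟨δ, hδC, hγδ, hδβ⟩ := hcl γ hγ
    rcases hδC.2.2 with ⟨i, hi, hieq⟩ | hlimδ
    · exact ⟨i, hi, hieq ▸ hγδ, hieq ▸ hδβ⟩
    · obtain ⟨i, hi, h1, h2⟩ := hlimδ γ hγδ
      exact ⟨i, hi, h1, h2.trans hδβ⟩
  -- the gap property
  have gap : ∀ η ∈ C', ∀ ξ, η ≤ ξ → ξ < η + η → ξ ∉ A' := by
    rintro η ⟨hηκ, hη0, hηD⟩ ξ hηξ hξ ⟨j, hj, rfl⟩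
    rcases hηD with ⟨i, hi, rfl⟩ | hlimη
    · -- η = seq i + seq i
      rcases lt_or_ge i j with hij | hji
      · -- seq j jumps past η + η
        have h1 : seq i ≤ s j := seq_le_s i j hij
        have h2 : seq i + seq i + (seq i + seq i) ≤ t j :=
          add_le_add (add_le_add h1 h1) (add_le_add h1 h1)
        exact absurd hξ (not_lt.mpr ((h2.trans (seq_gt j hj).le)))
      · -- seq j ≤ seq i < η
        have h1 : seq j ≤ seq i := by
          rcases eq_or_lt_of_le hji with rfl | h
          · exact le_rfl
          · exact (seq_mono j i h hi).le
        have h2 : seq i < seq i + seq i :=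
          lt_add_of_pos_right _ (seq_pos i hi)
        exact absurd hηξ (not_le.mpr (lt_of_le_of_lt h1 h2))
    · -- η is a limit of doubled points
      have hss : η ≤ s j + s j := by
        by_contra h
        push_neg at h
        obtain ⟨i, hi, h1, h2⟩ := hlimη (s j + s j) h
        have hiη : seq i < η := lt_of_le_of_lt (le_self_add) h2
        have hij : i < j := by
          by_contra hij
          push_neg at hij
          have : seq j ≤ seq i := by
            rcases eq_or_lt_of_le hij with rfl | hlt
            · exact le_rfl
            · exact (seq_mono j i hlt hi).le
          exact absurd (hηξ.trans this) (not_le.mpr hiη)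
        have : seq i ≤ s j := seq_le_s i j hij
        exact absurd (add_le_add this this) (not_le.mpr h1)
      have h2 : η + η ≤ t j := add_le_add hss hss
      exact absurd hξ (not_lt.mpr (h2.trans (seq_gt j hj).le))
  refine ⟨A', C', A'sub, A'unb, C'club, ?_, ?_, gap⟩
  · intro β hβ
    obtain ⟨γ, hγ, hβγ⟩ := A'unb β hβ
    exact ⟨γ, ⟨hγ, A'subB γ hγ⟩, hβγ⟩
  · intro α hα
    obtain ⟨β, hβ, hb⟩ := hBA α hα
    exact ⟨β, hβ, fun γ hγ => hb γ ⟨A'subB γ hγ.1, hγ.2⟩⟩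
end
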